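/- Let n ≥ 1 and let F : ℂ^(ZMod n) → ℂ^(ZMod n) be the unitary discrete Fourier transform. Then for every nonzero x ∈ ℂ^(ZMod n), ns(x)·ns(Fx) = n if and only if ‖x‖₀·‖Fx‖₀ = n. -/

import Mathlib

/-!
Write `y = 𝓕 x` for the unnormalised transform; `ns` and `norm0` are invariant under nonzero
scaling, so `dft n x` may be replaced by `y`. Every `|y k|` is at most `‖x‖₁`, so Parseval gives
`n ‖x‖₂² = ‖y‖₂² ≤ ‖x‖₁ ‖y‖₁`, i.e. `n ≤ ns x * ns y`. Equality forces every nonzero `|y k|`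
to equal `‖x‖₁` and, through the inverse transform, every nonzero `|x j|` to equal `‖y‖₁ / n`.
A vector whose nonzero entries have a common modulus has `ns = norm0`, while `ns ≤ norm0` always
holds by Cauchy–Schwarz on the support; together these give both directions.
-/

open scoped BigOperators

/-- Number of nonzero entries ("0-norm"). -/
noncomputable def norm0 {N : Type*} (x : N → ℂ) : ℕ := Nat.card {i // x i ≠ 0}

/-- The 1-norm. -/
noncomputable def norm1 {N : Type*} [Fintype N] (x : N → ℂ) : ℝ := ∑ i, ‖x i‖

/-- The squared 2-norm. -/
noncomputable def norm2sq {N : Type*} [Fintype N] (x : N → ℂ) : ℝ := ∑ i, ‖x i‖ ^ 2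

/-- Numerical sparsity: `ns x = ‖x‖₁² / ‖x‖₂²`. -/
noncomputable def ns {N : Type*} [Fintype N] (x : N → ℂ) : ℝ := norm1 x ^ 2 / norm2sq x

/-- The unitary discrete Fourier transform on `ℂ^(ZMod n)`. -/
noncomputable def dft (n : ℕ) [NeZero n] (x : ZMod n → ℂ) : ZMod n → ℂ := fun k =>
  (1 / Real.sqrt n : ℝ) *
    ∑ j : ZMod n, x j *
      Complex.exp (-(2 * (Real.pi : ℂ) * Complex.I * (j.val : ℂ) * (k.val : ℂ)) / (n : ℂ))

open Finset ComplexConjugate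

section Sparsity

variable {ι : Type*} [Fintype ι]

lemma norm2sq_pos {x : ι → ℂ} (hx : x ≠ 0) : 0 < norm2sq x := by
  obtain ⟨i, hi⟩ := Function.ne_iff.mp hx
  exact sum_pos' (fun j _ => by positivity) ⟨i, mem_univ i, by positivity⟩

lemma norm1_nonneg (x : ι → ℂ) : 0 ≤ norm1 x :=
  sum_nonneg fun i _ => norm_nonneg (x i)

lemma ns_nonneg (x : ι → ℂ) : 0 ≤ ns x :=
  div_nonneg (sq_nonneg _) (sum_nonneg fun i _ => by positivity)

lemma norm0_eq_card_filter [DecidableEq ι] (x : ι → ℂ) : norm0 x = #{i | x i ≠ 0} := by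
  rw [norm0, Nat.card_eq_fintype_card, Fintype.card_subtype]

lemma sum_eq_sum_filter_ne_zero [DecidableEq ι] (x : ι → ℂ) {g : ι → ℝ}
    (hg : ∀ i, x i = 0 → g i = 0) : ∑ i, g i = ∑ i with x i ≠ 0, g i :=
  (sum_filter_of_ne (p := fun i => x i ≠ 0) fun i _ h hi => h (hg i hi)).symm

lemma ns_le_norm0 (x : ι → ℂ) : ns x ≤ norm0 x := by
  classical
  refine div_le_of_le_mul₀ (sum_nonneg fun i _ => by positivity) (Nat.cast_nonneg _) ?_
  rw [norm1, norm2sq, sum_eq_sum_filter_ne_zero x (g := fun i => ‖x i‖) (by simp),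
    sum_eq_sum_filter_ne_zero x (g := fun i => ‖x i‖ ^ 2) (by simp), norm0_eq_card_filter]
  exact sq_sum_le_card_mul_sum_sq

lemma ns_eq_norm0_of_norm_eq {x : ι → ℂ} {M : ℝ} (h : ∀ i, x i ≠ 0 → ‖x i‖ = M) :
    ns x = norm0 x := by
  classical
  have hsupp (f : ℝ → ℝ) (hf : f 0 = 0) : ∑ i, f ‖x i‖ = #{i | x i ≠ 0} * f M := by
    rw [sum_eq_sum_filter_ne_zero x (g := fun i => f ‖x i‖) fun i hi => by simp [hi, hf],
      ← nsmul_eq_mul, ← sum_const]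
    exact sum_congr rfl fun i hi => by rw [h i (mem_filter.mp hi).2]
  rw [ns, norm1, norm2sq, hsupp (fun t => t) rfl, hsupp (· ^ 2) (by simp), norm0_eq_card_filter]
  rcases eq_empty_or_nonempty {i | x i ≠ 0} with hempty | ⟨i, hi⟩
  · simp [hempty]
  · have hxi : x i ≠ 0 := (mem_filter.mp hi).2
    have hM : M ≠ 0 := h i hxi ▸ norm_ne_zero_iff.mpr hxi
    have hcard : (#{i | x i ≠ 0} : ℝ) ≠ 0 := Nat.cast_ne_zero.mpr (card_ne_zero_of_mem hi)
    field_simp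

lemma norm2sq_le_mul_norm1 {x : ι → ℂ} {M : ℝ} (hM : ∀ i, ‖x i‖ ≤ M) :
    norm2sq x ≤ M * norm1 x := by
  rw [norm2sq, norm1, mul_sum]
  exact sum_le_sum fun i _ => by rw [sq]; exact mul_le_mul_of_nonneg_right (hM i) (norm_nonneg _)

lemma ns_eq_norm0_of_mul_norm1_eq {x : ι → ℂ} {M : ℝ} (hM : ∀ i, ‖x i‖ ≤ M)
    (h : M * norm1 x = norm2sq x) : ns x = norm0 x := by
  have hgap : ∑ i, ‖x i‖ * (M - ‖x i‖) = 0 := by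
    simp only [mul_sub, sum_sub_distrib, ← sq]
    rw [← norm2sq, ← sum_mul, ← norm1, mul_comm, h, sub_self]
  have hgap_nonneg : ∀ i ∈ univ, 0 ≤ ‖x i‖ * (M - ‖x i‖) := fun i _ =>
    mul_nonneg (norm_nonneg _) (sub_nonneg.mpr (hM i))
  refine ns_eq_norm0_of_norm_eq (M := M) fun i hi => ?_
  have hi' := (sum_eq_zero_iff_of_nonneg hgap_nonneg).mp hgap i (mem_univ i)
  rcases mul_eq_zero.mp hi' with h0 | h0
  · exact absurd (norm_eq_zero.mp h0) hi
  · linarith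

lemma norm0_smul {x : ι → ℂ} {c : ℂ} (hc : c ≠ 0) : norm0 (c • x) = norm0 x := by
  simp [norm0, hc]

lemma ns_smul (x : ι → ℂ) {c : ℂ} (hc : c ≠ 0) : ns (c • x) = ns x := by
  have hc' : ‖c‖ ≠ 0 := norm_ne_zero_iff.mpr hc
  simp only [ns, norm1, norm2sq, Pi.smul_apply, smul_eq_mul, norm_mul, mul_pow, ← mul_sum]
  field_simp

lemma norm_sum_mul_le_norm1 {u : ι → ℂ} (hu : ∀ i, ‖u i‖ = 1) (x : ι → ℂ) :
    ‖∑ i, u i * x i‖ ≤ norm1 x :=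
  (norm_sum_le _ _).trans_eq (by simp [norm1, hu])

lemma ofReal_norm2sq (x : ι → ℂ) : (norm2sq x : ℂ) = ∑ i, conj (x i) * x i := by
  simp [norm2sq, Complex.conj_mul']

end Sparsity

section UncertaintyPair

variable {ι κ : Type*} [Fintype ι] [Fintype κ] {x : ι → ℂ} {y : κ → ℂ} {a : ℝ}

lemma le_ns_mul_ns (ha : 0 < a) (hx : x ≠ 0) (hy_le : ∀ k, ‖y k‖ ≤ norm1 x)
    (hxy : norm2sq y = a * norm2sq x) : a ≤ ns x * ns y := by
  have hx2 := norm2sq_pos hx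
  have key : a * norm2sq x ≤ norm1 x * norm1 y := hxy ▸ norm2sq_le_mul_norm1 hy_le
  rw [ns, ns, hxy, div_mul_div_comm, le_div_iff₀ (by positivity)]
  calc a * (norm2sq x * (a * norm2sq x)) = (a * norm2sq x) ^ 2 := by ring
    _ ≤ (norm1 x * norm1 y) ^ 2 := pow_le_pow_left₀ (by positivity) key 2
    _ = norm1 x ^ 2 * norm1 y ^ 2 := by ring

lemma ns_eq_norm0_of_ns_mul_ns_eq (ha : 0 < a) (hx : x ≠ 0) (hy_le : ∀ k, ‖y k‖ ≤ norm1 x)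
    (hx_le : ∀ j, a * ‖x j‖ ≤ norm1 y) (hxy : norm2sq y = a * norm2sq x)
    (h : ns x * ns y = a) : ns x = norm0 x ∧ ns y = norm0 y := by
  have hx2 := norm2sq_pos hx
  have key : norm1 x * norm1 y = a * norm2sq x := by
    rw [ns, ns, hxy, div_mul_div_comm, div_eq_iff (by positivity)] at h
    refine (sq_eq_sq₀ (mul_nonneg (norm1_nonneg x) (norm1_nonneg y)) (by positivity)).mp ?_
    linear_combination h
  constructor
  · refine ns_eq_norm0_of_mul_norm1_eq (M := norm1 y / a)
      (fun j => (le_div_iff₀' ha).mpr (hx_le j)) ?_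
    field_simp
    linarith
  · exact ns_eq_norm0_of_mul_norm1_eq hy_le (by rw [key, hxy])

lemma ns_mul_ns_eq_iff (ha : 0 < a) (hx : x ≠ 0) (hy_le : ∀ k, ‖y k‖ ≤ norm1 x)
    (hx_le : ∀ j, a * ‖x j‖ ≤ norm1 y) (hxy : norm2sq y = a * norm2sq x) :
    ns x * ns y = a ↔ (norm0 x * norm0 y : ℝ) = a := by
  constructor
  · intro h
    obtain ⟨hnsx, hnsy⟩ := ns_eq_norm0_of_ns_mul_ns_eq ha hx hy_le hx_le hxy h
    rw [← hnsx, ← hnsy, h]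
  · intro h
    refine le_antisymm ?_ (le_ns_mul_ns ha hx hy_le hxy)
    exact h ▸ mul_le_mul (ns_le_norm0 x) (ns_le_norm0 y) (ns_nonneg y) (Nat.cast_nonneg _)

end UncertaintyPair

section Fourier

open scoped ZMod

variable {N : ℕ} [NeZero N]

lemma sum_stdAddChar_mul_dft (Φ : ZMod N → ℂ) (j : ZMod N) :
    ∑ k, ZMod.stdAddChar (k * j) * 𝓕 Φ k = N * Φ j := by
  have h := ZMod.invDFT_apply (𝓕 Φ) j
  rw [LinearEquiv.symm_apply_apply] at h
  rw [h, smul_eq_mul, ← mul_assoc, mul_inv_cancel₀ (NeZero.ne _), one_mul]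
  rfl

lemma norm_dft_apply_le (Φ : ZMod N → ℂ) (k : ZMod N) : ‖𝓕 Φ k‖ ≤ norm1 Φ :=
  norm_sum_mul_le_norm1 (fun _ => AddChar.norm_apply _ _) Φ

lemma natCast_mul_norm_le_norm1_dft (Φ : ZMod N → ℂ) (j : ZMod N) :
    N * ‖Φ j‖ ≤ norm1 (𝓕 Φ) := by
  rw [← Complex.norm_natCast, ← norm_mul, ← sum_stdAddChar_mul_dft]
  exact norm_sum_mul_le_norm1 (fun _ => AddChar.norm_apply _ _) _

lemma norm2sq_dft (Φ : ZMod N → ℂ) : norm2sq (𝓕 Φ) = N * norm2sq Φ := by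
  apply Complex.ofReal_injective
  push_cast
  rw [ofReal_norm2sq, ofReal_norm2sq]
  calc ∑ k, conj (𝓕 Φ k) * 𝓕 Φ k
      = ∑ k, conj (𝓕 Φ k) * ∑ j, ZMod.stdAddChar (-(j * k)) * Φ j := rfl
    _ = ∑ j, Φ j * conj (∑ k, ZMod.stdAddChar (k * j) * 𝓕 Φ k) := by
        simp_rw [mul_sum, map_sum, map_mul, ← AddChar.map_neg_eq_conj, mul_sum]
        rw [sum_comm]
        refine sum_congr rfl fun j _ => sum_congr rfl fun k _ => ?_
        rw [mul_comm k j]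
        ring
    _ = N * ∑ j, conj (Φ j) * Φ j := by
        simp_rw [sum_stdAddChar_mul_dft, map_mul, mul_sum, Complex.conj_natCast]
        exact sum_congr rfl fun j _ => by ring

lemma dft_eq_smul_zmodDFT (n : ℕ) [NeZero n] (x : ZMod n → ℂ) :
    dft n x = ((1 / Real.sqrt n : ℝ) : ℂ) • 𝓕 x := by
  ext k
  simp only [dft, Pi.smul_apply, smul_eq_mul, ZMod.dft_apply]
  refine congrArg _ (sum_congr rfl fun j _ => ?_)
  have hcast : -(j * k) = ((-(j.val * k.val : ℤ) : ℤ) : ZMod n) := by simp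
  rw [hcast, ZMod.stdAddChar_coe, mul_comm]
  push_cast
  ring_nf

end Fourier

/-- Equality in the multiplicative numerical-sparsity uncertainty principle for the DFT
occurs exactly when equality occurs in the classical one:
`ns(x)·ns(Fx) = n ↔ ‖x‖₀·‖Fx‖₀ = n`. -/
theorem ns_equality_iff_sparsity_equality (n : ℕ) [NeZero n]
    (x : ZMod n → ℂ) (hx : x ≠ 0) :
    ns x * ns (dft n x) = (n : ℝ) ↔ norm0 x * norm0 (dft n x) = n := by
  have hn : (0 : ℝ) < n := Nat.cast_pos.mpr (Nat.pos_of_ne_zero (NeZero.ne n))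
  have hc : ((1 / Real.sqrt n : ℝ) : ℂ) ≠ 0 := by
    exact_mod_cast (one_div_pos.mpr (Real.sqrt_pos.mpr hn)).ne'
  rw [dft_eq_smul_zmodDFT, ns_smul _ hc, norm0_smul hc, ← Nat.cast_inj (R := ℝ), Nat.cast_mul]
  exact ns_mul_ns_eq_iff hn hx (norm_dft_apply_le x) (natCast_mul_norm_le_norm1_dft x)
    (norm2sq_dft x)
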